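/- Let X be a real linear n-normed space, S a subspace of X, and x ∈ X such that x, b₂,…,bₙ are linearly independent. Then inf{‖x − s, b₂,…,bₙ‖ : s ∈ S} = sup{T(x, b₂,…,bₙ) : T ∈ S_F^θ}, where S_F^θ is the set of bounded b-linear functionals T on X × ⟨b₂⟩ × ⋯ × ⟨bₙ⟩ with ‖T‖ ≤ 1 and T(s, b₂,…,bₙ) = 0 for all s ∈ S. -/

import Mathlib

noncomputable section
open Filter Topology

/-- A linear `n+1`-normed space over `𝕜` (real or complex): an `(n+1)`-norm on `X`. -/
structure NNormSp (n : ℕ) (𝕜 : Type*) (X : Type*) [RCLike 𝕜] [AddCommGroup X] [Module 𝕜 X] where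
  N : (Fin (n + 1) → X) → ℝ
  eq_zero_iff : ∀ v : Fin (n + 1) → X, N v = 0 ↔ ¬ LinearIndependent 𝕜 v
  perm_invariant : ∀ (v : Fin (n + 1) → X) (σ : Equiv.Perm (Fin (n + 1))), N (v ∘ σ) = N v
  smul_first : ∀ (α : 𝕜) (x : X) (a : Fin n → X), N (Fin.cons (α • x) a) = ‖α‖ * N (Fin.cons x a)
  add_first : ∀ (x y : X) (a : Fin n → X),
    N (Fin.cons (x + y) a) ≤ N (Fin.cons x a) + N (Fin.cons y a)

namespace NNormSp

variable {n : ℕ} {𝕜 X : Type*} [RCLike 𝕜] [AddCommGroup X] [Module 𝕜 X]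

/-- Convergence of a sequence in a linear n-normed space. -/
def TendstoSeq (S : NNormSp n 𝕜 X) (x : ℕ → X) (l : X) : Prop :=
  ∀ a : Fin n → X, Tendsto (fun k => S.N (Fin.cons (x k - l) a)) atTop (𝓝 0)

/-- Cauchy sequence in a linear n-normed space. -/
def CauchySeqN (S : NNormSp n 𝕜 X) (x : ℕ → X) : Prop :=
  ∀ a : Fin n → X, Tendsto (fun p : ℕ × ℕ => S.N (Fin.cons (x p.1 - x p.2) a)) atTop (𝓝 0)

/-- An n-Banach space: every Cauchy sequence converges. -/
def Complete (S : NNormSp n 𝕜 X) : Prop :=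
  ∀ x : ℕ → X, S.CauchySeqN x → ∃ l, S.TendstoSeq x l

/-- Boundedness of a b-linear functional with respect to the fixed tuple `b`. -/
def IsBounded (S : NNormSp n 𝕜 X) (b : Fin n → X) (T : X → 𝕜) : Prop :=
  ∃ M > (0 : ℝ), ∀ x : X, ‖T x‖ ≤ M * S.N (Fin.cons x b)

/-- The norm of a bounded b-linear functional. -/
def opNorm (S : NNormSp n 𝕜 X) (b : Fin n → X) (T : X → 𝕜) : ℝ :=
  sInf {M : ℝ | 0 < M ∧ ∀ x : X, ‖T x‖ ≤ M * S.N (Fin.cons x b)}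

/-- Continuity of a functional at a point, in the open-ball sense. -/
def ContAt (S : NNormSp n 𝕜 X) (T : X → 𝕜) (x₀ : X) : Prop :=
  ∀ ε > (0 : ℝ), ∃ (e : Fin n → X) (δ : ℝ), 0 < δ ∧
    ∀ x : X, S.N (Fin.cons (x - x₀) e) < δ → ‖T x - T x₀‖ < ε

end NNormSp

/-- A b-linear functional: additive and homogeneous in its first argument. -/
def IsBLinear {𝕜 X : Type*} [RCLike 𝕜] [AddCommGroup X] [Module 𝕜 X] (T : X → 𝕜) : Prop :=
  (∀ x y : X, T (x + y) = T x + T y) ∧ ∀ (c : 𝕜) (x : X), T (c • x) = c * T x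

/-!
The left-hand side is the quotient seminorm `p y = inf_{s ∈ Sub} ‖y - s, b‖` evaluated at `x`.
Every admissible `T` satisfies `T x = T (x - s) ≤ ‖x - s, b‖`, so the supremum is at most `p x`.
Conversely, Hahn–Banach for the seminorm `p` gives a linear `T` with `|T| ≤ p` and `T x = p x`;
since `p` vanishes on `Sub` and is dominated by `‖·, b‖`, this `T` is admissible and attains `p x`.
-/

namespace Seminorm

section InfDist

variable {𝕜 E : Type*} [NormedField 𝕜] [AddCommGroup E] [Module 𝕜 E]
  (q : Seminorm 𝕜 E) (M : Submodule 𝕜 E)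

lemma bddBelow_range_apply_sub (y : E) : BddBelow (Set.range fun m : M => q (y - m)) :=
  ⟨0, by rintro _ ⟨m, rfl⟩; exact apply_nonneg q _⟩

lemma iInf_apply_add_sub_le (y z : E) :
    (⨅ m : M, q (y + z - m)) ≤ (⨅ m : M, q (y - m)) + ⨅ m : M, q (z - m) := by
  have key : ∀ s t : M, (⨅ m : M, q (y + z - m)) ≤ q (y - s) + q (z - t) := fun s t =>
    ciInf_le_of_le (q.bddBelow_range_apply_sub M _) (s + t) <| by
      simpa [add_sub_add_comm] using map_add_le_add q (y - s) (z - t)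
  have h : ∀ s : M, (⨅ m : M, q (y + z - m)) - q (y - s) ≤ ⨅ m : M, q (z - m) :=
    fun s => le_ciInf fun t => by linarith [key s t]
  have : (⨅ m : M, q (y + z - m)) - ⨅ m : M, q (z - m) ≤ ⨅ m : M, q (y - m) :=
    le_ciInf fun s => by linarith [h s]
  linarith

lemma iInf_apply_smul_sub_le (r : 𝕜) (y : E) :
    (⨅ m : M, q (r • y - m)) ≤ ‖r‖ * ⨅ m : M, q (y - m) := by
  rw [Real.mul_iInf_of_nonneg (norm_nonneg r)]
  exact le_ciInf fun m =>
    ciInf_le_of_le (q.bddBelow_range_apply_sub M _) ⟨r • m, M.smul_mem r m.2⟩ <| by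
      simp [← smul_sub, map_smul_eq_mul]

/-- The quotient seminorm of `q` on `E ⧸ M`, pulled back to `E`. -/
noncomputable def infDist : Seminorm 𝕜 E :=
  Seminorm.ofSMulLE (fun y => ⨅ m : M, q (y - m))
    (le_antisymm (ciInf_le_of_le (q.bddBelow_range_apply_sub M 0) 0 (by simp))
      (le_ciInf fun _ => apply_nonneg q _))
    (q.iInf_apply_add_sub_le M) (q.iInf_apply_smul_sub_le M)

variable {q M}

lemma infDist_le {y m : E} (hm : m ∈ M) : q.infDist M y ≤ q (y - m) :=
  ciInf_le (q.bddBelow_range_apply_sub M y) ⟨m, hm⟩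

lemma infDist_le_self (y : E) : q.infDist M y ≤ q y := by
  simpa using infDist_le (y := y) M.zero_mem

lemma le_infDist {y : E} {a : ℝ} (h : ∀ m ∈ M, a ≤ q (y - m)) : a ≤ q.infDist M y :=
  le_ciInf fun m => h m m.2

lemma infDist_eq_zero_of_mem {m : E} (hm : m ∈ M) : q.infDist M m = 0 :=
  le_antisymm (by simpa using infDist_le (q := q) (y := m) hm) (apply_nonneg _ _)

end InfDist

theorem exists_dual_vector {E : Type*} [AddCommGroup E] [Module ℝ E] (p : Seminorm ℝ E) (x : E) :
    ∃ T : Module.Dual ℝ E, (∀ y, |T y| ≤ p y) ∧ T x = p x := by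
  have H : ∀ c : ℝ, c • x = 0 → RingHom.id ℝ c • p x = 0 := by
    intro c hc
    rcases smul_eq_zero.1 hc with rfl | rfl <;> simp
  set f := LinearPMap.mkSpanSingleton' x (p x) H
  have hf : ∀ z : f.domain, f z ≤ p z := by
    rintro ⟨z, hz⟩
    obtain ⟨c, rfl⟩ := Submodule.mem_span_singleton.1 hz
    rw [LinearPMap.mkSpanSingleton'_apply, RingHom.id_apply, smul_eq_mul, map_smul_eq_mul,
      Real.norm_eq_abs]
    exact mul_le_mul_of_nonneg_right (le_abs_self c) (apply_nonneg p x)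
  obtain ⟨T, hTf, hTp⟩ := exists_extension_of_le_sublinear f p
    (fun c hc y => by rw [map_smul_eq_mul, Real.norm_of_nonneg hc.le]) (map_add_le_add p) hf
  refine ⟨T, p.abs_le_of_le hTp, ?_⟩
  have hx : x ∈ f.domain := Submodule.mem_span_singleton_self x
  exact (hTf ⟨x, hx⟩).trans (LinearPMap.mkSpanSingleton'_apply_self _ _ _ _)

end Seminorm

namespace NNormSp

section RCLike

variable {n : ℕ} {𝕜 X : Type*} [RCLike 𝕜] [AddCommGroup X] [Module 𝕜 X]
  (S : NNormSp n 𝕜 X) (b : Fin n → X)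

def seminorm : Seminorm 𝕜 X :=
  Seminorm.of (fun y => S.N (Fin.cons y b)) (fun y z => S.add_first y z b)
    (fun c y => S.smul_first c y b)

lemma seminorm_apply (y : X) : S.seminorm b y = S.N (Fin.cons y b) := rfl

lemma N_cons_nonneg (y : X) : 0 ≤ S.N (Fin.cons y b) := apply_nonneg (S.seminorm b) y

variable {S b} {T : X → 𝕜}

lemma norm_le_opNorm_mul (hT : S.IsBounded b T) (y : X) :
    ‖T y‖ ≤ S.opNorm b T * S.N (Fin.cons y b) := by
  obtain ⟨M₀, hM₀, hb₀⟩ := hT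
  rcases (S.N_cons_nonneg b y).eq_or_lt with hN | hN
  · simpa [← hN] using hb₀ y
  · rw [← div_le_iff₀ hN]
    exact le_csInf ⟨M₀, hM₀, hb₀⟩ fun M hM => (div_le_iff₀ hN).2 (hM.2 y)

lemma opNorm_le_of_bound {M : ℝ} (hM : 0 < M) (h : ∀ y, ‖T y‖ ≤ M * S.N (Fin.cons y b)) :
    S.opNorm b T ≤ M :=
  csInf_le ⟨0, fun _ hM' => hM'.1.le⟩ ⟨hM, h⟩

end RCLike

section Real

variable {n : ℕ} {X : Type*} [AddCommGroup X] [Module ℝ X] {S : NNormSp n ℝ X} {b : Fin n → X}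
  {Sub : Submodule ℝ X}

lemma annihilator_apply_le_infDist {T : X → ℝ} (hlin : IsBLinear T) (hT : S.IsBounded b T)
    (hnorm : S.opNorm b T ≤ 1) (hzero : ∀ s ∈ Sub, T s = 0) (x : X) :
    T x ≤ (S.seminorm b).infDist Sub x :=
  Seminorm.le_infDist fun s hs => calc
    T x = T (x - s) := by rw [← add_zero (T (x - s)), ← hzero s hs, ← hlin.1, sub_add_cancel]
    _ ≤ ‖T (x - s)‖ := Real.le_norm_self _
    _ ≤ S.opNorm b T * S.N (Fin.cons (x - s) b) := norm_le_opNorm_mul hT _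
    _ ≤ S.N (Fin.cons (x - s) b) :=
      mul_le_of_le_one_left (S.N_cons_nonneg b _) hnorm

lemma exists_annihilator_apply_eq_infDist (x : X) :
    ∃ T : X → ℝ, IsBLinear T ∧ S.IsBounded b T ∧ S.opNorm b T ≤ 1 ∧ (∀ s ∈ Sub, T s = 0) ∧
      (S.seminorm b).infDist Sub x = T x := by
  obtain ⟨T, hTp, hTx⟩ := ((S.seminorm b).infDist Sub).exists_dual_vector x
  have hbound : ∀ y, ‖T y‖ ≤ 1 * S.N (Fin.cons y b) := fun y => by
    rw [one_mul, Real.norm_eq_abs]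
    exact (hTp y).trans (Seminorm.infDist_le_self y)
  refine ⟨T, ⟨T.map_add, T.map_smul⟩, ⟨1, one_pos, hbound⟩,
    opNorm_le_of_bound one_pos hbound, fun s hs => ?_, hTx.symm⟩
  simpa [Seminorm.infDist_eq_zero_of_mem hs] using hTp s

end Real

end NNormSp

theorem dist_eq_sup_annihilator_general
    {n : ℕ} {X : Type*} [AddCommGroup X] [Module ℝ X]
    (S : NNormSp n ℝ X) (b : Fin n → X) (Sub : Submodule ℝ X)
    (x : X) :
    sInf {r : ℝ | ∃ s ∈ Sub, r = S.N (Fin.cons (x - s) b)} =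
      sSup {r : ℝ | ∃ T : X → ℝ, IsBLinear T ∧ S.IsBounded b T ∧
        S.opNorm b T ≤ 1 ∧ (∀ s ∈ Sub, T s = 0) ∧ r = T x} := by
  have hinf : {r : ℝ | ∃ s ∈ Sub, r = S.N (Fin.cons (x - s) b)} =
      Set.range fun s : Sub => S.seminorm b (x - s) := by
    ext r; simp [eq_comm, NNormSp.seminorm_apply]
  have hgreatest : IsGreatest {r : ℝ | ∃ T : X → ℝ, IsBLinear T ∧ S.IsBounded b T ∧
      S.opNorm b T ≤ 1 ∧ (∀ s ∈ Sub, T s = 0) ∧ r = T x} ((S.seminorm b).infDist Sub x) := by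
    refine ⟨NNormSp.exists_annihilator_apply_eq_infDist x, ?_⟩
    rintro r ⟨T, hlin, hT, hnorm, hzero, rfl⟩
    exact NNormSp.annihilator_apply_le_infDist hlin hT hnorm hzero x
  rw [hgreatest.csSup_eq, hinf]
  rfl

theorem dist_eq_sup_annihilator
    {n : ℕ} {X : Type*} [AddCommGroup X] [Module ℝ X]
    (S : NNormSp n ℝ X) (b : Fin n → X) (Sub : Submodule ℝ X)
    (x : X) (hind : LinearIndependent ℝ (Fin.cons x b)) :
    sInf {r : ℝ | ∃ s ∈ Sub, r = S.N (Fin.cons (x - s) b)} =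
      sSup {r : ℝ | ∃ T : X → ℝ, IsBLinear T ∧ S.IsBounded b T ∧
        S.opNorm b T ≤ 1 ∧ (∀ s ∈ Sub, T s = 0) ∧ r = T x} :=
  dist_eq_sup_annihilator_general S b Sub x
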